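/- arXiv:1811.11076 — 5 statements merged into one kernel-verified Lean document; each statement's English description precedes it below -/
import Mathlib

section
/- Let (D_{ℓ,j}) for ℓ ∈ ℕ and j ∈ ℕ be independent, identically distributed nonnegative real-valued random variables with mean μ = E[D_{1,1}] > 0, strictly positive variance, finite third absolute moment, and such that P[D_{1,1} ≥ x] < 1 for every x > 0. For r, k ≥ 1 define Q(r,k) = E[Σ_{j=1}^k min_{1≤ℓ≤r} D_{ℓ,j}] / E[min_{1≤ℓ≤r} Σ_{j=1}^k D_{ℓ,j}]. Then the iterated limit lim_{r→∞} lim_{k→∞} Q(r,k) equals 0; that is, for every ε > 0 there exists r₀ such that for every r ≥ r₀ there exists K with Q(r,k) ≤ ε for all k ≥ K. -/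
/-!
Write `μ = E[D]` and `p = P[D ≥ x]`, so `p < 1` for every `x > 0`. In each coordinate `j`,
`min_ℓ D (ℓ, j) ≤ x + D (0, j) · ∏_{ℓ ≥ 1} 1[D (ℓ, j) ≥ x]`, hence by independence the
numerator of `Q (r, k)` is at most `k (x + μ p^(r-1))`. For the denominator, with
`S ℓ = Σ_j D (ℓ, j)`, `min_ℓ S ℓ ≥ k μ - Σ_ℓ |S ℓ - k μ|`, and `E |S ℓ - k μ|` grows only like
`√k` since `Var (S ℓ) = k Var D`; so for fixed `r` the denominator is at least `k μ / 2` once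
`k` is large. Thus `Q (r, k) ≤ 2 (x + μ p^(r-1)) / μ`, which is small for `x` small and then
`r` large.
-/

open MeasureTheory ProbabilityTheory Filter

section

variable {Ω : Type*} {mΩ : MeasurableSpace Ω} {μ : Measure Ω}

lemma integrable_iInf {ι : Type*} [Finite ι] [Nonempty ι] {f : ι → Ω → ℝ}
    (hf : ∀ i, Integrable (f i) μ) : Integrable (fun ω => ⨅ i, f i ω) μ := by
  have := Fintype.ofFinite ι
  refine (integrable_finsetSum Finset.univ fun i _ => (hf i).abs).mono'
    (AEMeasurable.iInf fun i => (hf i).aemeasurable).aestronglyMeasurable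
    (ae_of_all _ fun ω => ?_)
  obtain ⟨i, hi⟩ := exists_eq_ciInf_of_finite (f := fun i => f i ω)
  rw [← hi, Real.norm_eq_abs]
  exact Finset.single_le_sum (f := fun i => |f i ω|) (fun i _ => abs_nonneg _)
    (Finset.mem_univ i)

lemma integral_indicator_one_comp {Y : Ω → ℝ} (hY : AEMeasurable Y μ) {s : Set ℝ}
    (hs : MeasurableSet s) : ∫ ω, s.indicator 1 (Y ω) ∂μ = μ.real (Y ⁻¹' s) := by
  rw [← integral_map hY (measurable_one.indicator hs).aestronglyMeasurable,
    integral_indicator_one hs, map_measureReal_apply_of_aemeasurable hY hs]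

lemma iInf_le_add_mul_prod_indicator {n : ℕ} (a : Fin (n + 1) → ℝ) {x : ℝ} (hx : 0 ≤ x) :
    ⨅ i, a i ≤ x + a 0 * ∏ i : Fin n, (Set.Ici x).indicator 1 (a i.succ) := by
  have hle : ∀ i, ⨅ i, a i ≤ a i := fun i => ciInf_le (Set.finite_range a).bddBelow i
  by_cases h : ∀ i : Fin n, x ≤ a i.succ
  · rw [Finset.prod_eq_one fun i _ => Set.indicator_of_mem (h i) _]
    linarith [hle 0]
  · obtain ⟨i, hi⟩ := not_forall.1 h
    rw [Finset.prod_eq_zero (Finset.mem_univ i) (Set.indicator_of_notMem hi _)]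
    linarith [hle i.succ, not_le.1 hi]

lemma variance_sum_range_of_identDistrib {X : ℕ → Ω → ℝ} {Y : Ω → ℝ} (hY : MemLp Y 2 μ)
    (hindep : Pairwise fun i j => IndepFun (X i) (X j) μ)
    (hident : ∀ i, IdentDistrib (X i) Y μ μ) (k : ℕ) :
    variance (fun ω => ∑ j ∈ Finset.range k, X j ω) μ = k * variance Y μ := by
  have hsum : (fun ω => ∑ j ∈ Finset.range k, X j ω) = ∑ j ∈ Finset.range k, X j := by
    ext ω; simp
  rw [hsum, IndepFun.variance_sum (fun i _ => (hident i).memLp_iff.2 hY)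
    fun i _ j _ hij => hindep hij]
  simp [fun i => (hident i).variance_eq]

lemma integral_sum_range_of_identDistrib {X : ℕ → Ω → ℝ} {Y : Ω → ℝ} (hY : Integrable Y μ)
    (hident : ∀ i, IdentDistrib (X i) Y μ μ) (k : ℕ) :
    ∫ ω, ∑ j ∈ Finset.range k, X j ω ∂μ = k * ∫ ω, Y ω ∂μ := by
  rw [integral_finsetSum _ fun i _ => (hident i).integrable_iff.2 hY]
  simp [fun i => (hident i).integral_eq]

variable [IsProbabilityMeasure μ]

lemma integral_iInf_le_add_mul_pow {n : ℕ} {X : Fin (n + 1) → Ω → ℝ} {Y : Ω → ℝ}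
    (hX : iIndepFun X μ) (hident : ∀ i, IdentDistrib (X i) Y μ μ) (hY : Integrable Y μ)
    {x : ℝ} (hx : 0 ≤ x) :
    ∫ ω, ⨅ i, X i ω ∂μ ≤ x + (∫ ω, Y ω ∂μ) * μ.real (Y ⁻¹' Set.Ici x) ^ n := by
  set g : ℝ → ℝ := (Set.Ici x).indicator 1
  have hg : Measurable g := measurable_one.indicator measurableSet_Ici
  set f : Fin (n + 1) → ℝ → ℝ := Fin.cons id fun _ => g
  have hf : ∀ i, Measurable (f i) := Fin.cases measurable_id fun _ => hg
  have hXint : ∀ i, Integrable (X i) μ := fun i => (hident i).integrable_iff.2 hY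
  have hprod : ∀ ω, ∏ i, f i (X i ω) = X 0 ω * ∏ i : Fin n, g (X i.succ ω) := fun ω => by
    simp [f, Fin.prod_univ_succ]
  have hprod_int : Integrable (fun ω => ∏ i, f i (X i ω)) μ := by
    simp_rw [hprod]
    refine (hXint 0).mul_bdd (c := 1) ?_ (ae_of_all _ fun ω => ?_)
    · exact Finset.aestronglyMeasurable_fun_prod _ fun i _ =>
        (hg.comp_aemeasurable (hident _).aemeasurable_fst).aestronglyMeasurable
    · have hg0 : ∀ y, 0 ≤ g y := Set.indicator_nonneg fun _ _ => zero_le_one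
      have hg1 : ∀ y, g y ≤ 1 := Set.indicator_le_self' fun _ _ => zero_le_one
      rw [Real.norm_eq_abs, abs_of_nonneg (Finset.prod_nonneg fun i _ => hg0 _)]
      exact Finset.prod_le_one (fun i _ => hg0 _) fun i _ => hg1 _
  have hmean : ∀ i : Fin n, ∫ ω, g (X i.succ ω) ∂μ = μ.real (Y ⁻¹' Set.Ici x) := fun i => by
    rw [← integral_indicator_one_comp (hident i.succ).aemeasurable_snd measurableSet_Ici]
    exact ((hident i.succ).comp hg).integral_eq
  calc ∫ ω, ⨅ i, X i ω ∂μ ≤ ∫ ω, x + ∏ i, f i (X i ω) ∂μ :=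
        integral_mono (integrable_iInf hXint) ((integrable_const x).add hprod_int) fun ω => by
          simp only [hprod]; exact iInf_le_add_mul_prod_indicator _ hx
    _ = x + ∏ i, ∫ ω, f i (X i ω) ∂μ := by
        rw [integral_add (integrable_const x) hprod_int, integral_const,
          hX.integral_fun_prod_comp (fun i => (hident i).aemeasurable_fst)
            fun i => (hf i).aestronglyMeasurable]
        simp
    _ = x + (∫ ω, Y ω ∂μ) * μ.real (Y ⁻¹' Set.Ici x) ^ n := by
        rw [Fin.prod_univ_succ]
        simp only [f, Fin.cons_zero, Fin.cons_succ, id, hmean, Fin.prod_const,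
          (hident 0).integral_eq]

lemma integral_abs_sub_integral_le {X : Ω → ℝ} (hX : MemLp X 2 μ) {c : ℝ} (hc : 0 < c) :
    ∫ ω, |X ω - ∫ ω', X ω' ∂μ| ∂μ ≤ (variance X μ / c + c) / 2 := by
  set m := ∫ ω', X ω' ∂μ
  have hsq : Integrable (fun ω => (X ω - m) ^ 2) μ := (hX.sub (memLp_const m)).integrable_sq
  calc ∫ ω, |X ω - m| ∂μ ≤ ∫ ω, ((X ω - m) ^ 2 / c + c) / 2 ∂μ := by
        refine integral_mono ((hX.integrable one_le_two).sub (integrable_const m)).abs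
          (((hsq.div_const c).add (integrable_const c)).div_const 2) fun ω => ?_
        have : 2 * c * |X ω - m| ≤ (X ω - m) ^ 2 + c ^ 2 := by
          nlinarith [sq_nonneg (|X ω - m| - c), sq_abs (X ω - m)]
        rw [div_add' _ _ _ hc.ne', div_div, le_div_iff₀ (by positivity)]
        linarith
    _ = (variance X μ / c + c) / 2 := by
        rw [variance_eq_integral hX.aemeasurable, integral_div, integral_add (hsq.div_const c)
          (integrable_const c), integral_div, integral_const]
        simp [m]

lemma sub_card_mul_le_integral_iInf {ι : Type*} [Fintype ι] [Nonempty ι] {S : ι → Ω → ℝ}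
    {m v c : ℝ} (hS : ∀ i, MemLp (S i) 2 μ) (hmean : ∀ i, ∫ ω, S i ω ∂μ = m)
    (hvar : ∀ i, variance (S i) μ ≤ v) (hc : 0 < c) :
    m - Fintype.card ι * ((v / c + c) / 2) ≤ ∫ ω, ⨅ i, S i ω ∂μ := by
  have hint : ∀ i, Integrable (S i) μ := fun i => (hS i).integrable one_le_two
  have hdev : ∀ i, Integrable (fun ω => |S i ω - m|) μ := fun i =>
    ((hint i).sub (integrable_const m)).abs
  have hdev_int : Integrable (fun ω => m - ∑ i, |S i ω - m|) μ :=
    (integrable_const m).sub (integrable_finsetSum _ fun i _ => hdev i)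
  have hpt : ∀ ω, m - ∑ i, |S i ω - m| ≤ ⨅ i, S i ω := fun ω => le_ciInf fun i => by
    have := Finset.single_le_sum (f := fun i => |S i ω - m|) (fun i _ => abs_nonneg _)
      (Finset.mem_univ i)
    linarith [neg_abs_le (S i ω - m)]
  calc m - Fintype.card ι * ((v / c + c) / 2) = m - ∑ _i : ι, (v / c + c) / 2 := by simp
    _ ≤ m - ∑ i, ∫ ω, |S i ω - m| ∂μ := by
        gcongr with i
        calc ∫ ω, |S i ω - m| ∂μ ≤ (variance (S i) μ / c + c) / 2 :=
              hmean i ▸ integral_abs_sub_integral_le (hS i) hc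
          _ ≤ (v / c + c) / 2 := by gcongr; exact hvar i
    _ = ∫ ω, m - ∑ i, |S i ω - m| ∂μ := by
        rw [integral_sub (integrable_const m) (integrable_finsetSum _ fun i _ => hdev i),
          integral_finsetSum _ fun i _ => hdev i, integral_const]
        simp
    _ ≤ ∫ ω, ⨅ i, S i ω ∂μ := integral_mono hdev_int (integrable_iInf hint) hpt

variable {D : ℕ × ℕ → Ω → ℝ} {Y : Ω → ℝ}

lemma integral_sum_iInf_le (hindep : iIndepFun D μ) (hident : ∀ p, IdentDistrib (D p) Y μ μ)
    (hY : Integrable Y μ) {x : ℝ} (hx : 0 ≤ x) (n k : ℕ) :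
    ∫ ω, ∑ j ∈ Finset.range k, ⨅ ℓ : Fin (n + 1), D (ℓ, j) ω ∂μ ≤
      k * (x + (∫ ω, Y ω ∂μ) * μ.real (Y ⁻¹' Set.Ici x) ^ n) := by
  have hrow : ∀ j, iIndepFun (fun ℓ : Fin (n + 1) => D (ℓ, j)) μ := fun j =>
    hindep.precomp fun a b hab => Fin.ext (congrArg Prod.fst hab)
  rw [integral_finsetSum _ fun j _ => integrable_iInf fun ℓ => (hident _).integrable_iff.2 hY]
  calc ∑ j ∈ Finset.range k, ∫ ω, ⨅ ℓ : Fin (n + 1), D (ℓ, j) ω ∂μ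
      ≤ ∑ _j ∈ Finset.range k, (x + (∫ ω, Y ω ∂μ) * μ.real (Y ⁻¹' Set.Ici x) ^ n) :=
        Finset.sum_le_sum fun j _ =>
          integral_iInf_le_add_mul_pow (hrow j) (fun _ => hident _) hY hx
    _ = _ := by simp [mul_add]

lemma le_integral_iInf_sum (hindep : iIndepFun D μ) (hident : ∀ p, IdentDistrib (D p) Y μ μ)
    (hY : MemLp Y 2 μ) (hmean : 0 < ∫ ω, Y ω ∂μ) {n k : ℕ} (hk : 0 < k)
    (hkn : 4 * (n + 1) ^ 2 * variance Y μ ≤ k * (∫ ω, Y ω ∂μ) ^ 2) :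
    k * (∫ ω, Y ω ∂μ) / 2 ≤ ∫ ω, ⨅ ℓ : Fin (n + 1), ∑ j ∈ Finset.range k, D (ℓ, j) ω ∂μ := by
  set m := ∫ ω, Y ω ∂μ with hm
  have hcol : ∀ ℓ, Pairwise fun i j => IndepFun (D (ℓ, i)) (D (ℓ, j)) μ := fun ℓ i j hij =>
    hindep.indepFun fun h => hij (congrArg Prod.snd h)
  have hk' : (0 : ℝ) < k := Nat.cast_pos.2 hk
  have key := sub_card_mul_le_integral_iInf (μ := μ) (v := k * variance Y μ)
    (S := fun (ℓ : Fin (n + 1)) ω => ∑ j ∈ Finset.range k, D (ℓ, j) ω)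
    (fun ℓ => memLp_finsetSum _ fun j _ => (hident _).memLp_iff.2 hY)
    (fun ℓ => integral_sum_range_of_identDistrib (hY.integrable one_le_two) (fun j => hident _) k)
    (fun ℓ => (variance_sum_range_of_identDistrib hY (hcol ℓ) (fun j => hident _) k).le)
    (c := k * m / (2 * (n + 1))) (by positivity)
  have hsplit : ((n + 1 : ℕ) : ℝ) * ((k * variance Y μ / (k * m / (2 * (n + 1))) +
      k * m / (2 * (n + 1))) / 2) = (n + 1) ^ 2 * variance Y μ / m + k * m / 4 := by
    push_cast
    field_simp
    ring
  have hvar_small : (n + 1) ^ 2 * variance Y μ / m ≤ k * m / 4 := by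
    rw [div_le_iff₀ hmean]
    linarith
  rw [Fintype.card_fin, hsplit, ← hm] at key
  linarith

end

theorem statement2_general
    {Ω : Type*} [MeasureSpace Ω] [IsProbabilityMeasure (ℙ : Measure Ω)]
    (D : ℕ × ℕ → Ω → ℝ)
    (hint : ∀ p, Integrable (D p) ℙ)
    (hindep : iIndepFun D ℙ)
    (hident : ∀ p, IdentDistrib (D p) (D (0, 0)) ℙ ℙ)
    (hμpos : 0 < ∫ ω, D (0, 0) ω)
    (hmom3 : Integrable (fun ω => |D (0, 0) ω| ^ 3) ℙ)
    (htail : ∀ x : ℝ, 0 < x → ℙ {ω | x ≤ D (0, 0) ω} < 1)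
    (Q : ℕ → ℕ → ℝ)
    (hQ : ∀ r k, Q r k =
        (∫ ω, ∑ j ∈ Finset.range k, ⨅ ℓ : Fin r, D ((ℓ : ℕ), j) ω) /
          (∫ ω, ⨅ ℓ : Fin r, ∑ j ∈ Finset.range k, D ((ℓ : ℕ), j) ω)) :
    ∀ ε : ℝ, 0 < ε → ∃ r₀ : ℕ, 1 ≤ r₀ ∧ ∀ r : ℕ, r₀ ≤ r →
      ∃ K : ℕ, 1 ≤ K ∧ ∀ k : ℕ, K ≤ k → Q r k ≤ ε := by
  intro ε hε
  set μ := ∫ ω, D (0, 0) ω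
  set x := ε * μ / 4 with hx
  set p := (ℙ : Measure Ω).real (D (0, 0) ⁻¹' Set.Ici x)
  have hL2 : MemLp (D (0, 0)) 2 ℙ := (memLp_two_iff_integrable_sq (hint _).1).2 <| by
    simpa using integrable_norm_pow_of_le (hint _).1 (by norm_num : 2 ≤ 3) hmom3
  have hp : p < 1 :=
    (ENNReal.toReal_lt_toReal (measure_ne_top _ _) ENNReal.one_ne_top).2 (htail x (by positivity))
  obtain ⟨n₀, hn₀⟩ : ∃ n₀, ∀ n ≥ n₀, p ^ n ≤ ε / 4 := eventually_atTop.1 <|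
    (tendsto_pow_atTop_nhds_zero_of_lt_one measureReal_nonneg hp).eventually
      (ge_mem_nhds (by positivity))
  refine ⟨n₀ + 1, by omega, fun r hr => ?_⟩
  obtain ⟨n, rfl⟩ : ∃ n, r = n + 1 := ⟨r - 1, by omega⟩
  obtain ⟨K, hK⟩ := exists_nat_ge (4 * (n + 1) ^ 2 * variance (D (0, 0)) ℙ / μ ^ 2)
  refine ⟨K + 1, by omega, fun k hk => ?_⟩
  have hkK : (K : ℝ) + 1 ≤ k := by exact_mod_cast hk
  have hk0 : (0 : ℝ) < k := Nat.cast_pos.2 (by omega)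
  have hden : k * μ / 2 ≤ ∫ ω, ⨅ ℓ : Fin (n + 1), ∑ j ∈ Finset.range k, D (ℓ, j) ω :=
    le_integral_iInf_sum hindep hident hL2 hμpos (by omega) <| by
      rw [div_le_iff₀ (by positivity)] at hK
      nlinarith
  rw [hQ, div_le_iff₀ (lt_of_lt_of_le (by positivity) hden)]
  calc _ ≤ (k : ℝ) * (x + μ * p ^ n) :=
        integral_sum_iInf_le hindep hident (hint _) (by positivity) n k
    _ ≤ k * (ε * μ / 2) := by
        gcongr
        linarith [mul_le_mul_of_nonneg_left (hn₀ n (by omega)) hμpos.le]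
    _ = ε * (k * μ / 2) := by ring
    _ ≤ _ := by gcongr

/-- curse of dimensionality for `LB_Box`: For i.i.d. nonnegative random
variables `D (ℓ, j)` with positive mean, positive variance, finite third absolute moment and
`P[D ≥ x] < 1` for all `x > 0`, the iterated limit of the ratio
`Q(r,k) = E[Σ_{j<k} min_{ℓ<r} D (ℓ,j)] / E[min_{ℓ<r} Σ_{j<k} D (ℓ,j)]`,
first `k → ∞` then `r → ∞`, is `0`. -/
theorem statement2
    {Ω : Type*} [MeasureSpace Ω] [IsProbabilityMeasure (ℙ : Measure Ω)]
    (D : ℕ × ℕ → Ω → ℝ)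
    (hmeas : ∀ p, Measurable (D p))
    (hnonneg : ∀ p ω, 0 ≤ D p ω)
    (hint : ∀ p, Integrable (D p) ℙ)
    (hindep : iIndepFun D ℙ)
    (hident : ∀ p, IdentDistrib (D p) (D (0, 0)) ℙ ℙ)
    (hμpos : 0 < ∫ ω, D (0, 0) ω)
    (hvar : 0 < variance (D (0, 0)) ℙ)
    (hmom3 : Integrable (fun ω => |D (0, 0) ω| ^ 3) ℙ)
    (htail : ∀ x : ℝ, 0 < x → ℙ {ω | x ≤ D (0, 0) ω} < 1)
    (Q : ℕ → ℕ → ℝ)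
    (hQ : ∀ r k, Q r k =
        (∫ ω, ∑ j ∈ Finset.range k, ⨅ ℓ : Fin r, D ((ℓ : ℕ), j) ω) /
          (∫ ω, ⨅ ℓ : Fin r, ∑ j ∈ Finset.range k, D ((ℓ : ℕ), j) ω)) :
    ∀ ε : ℝ, 0 < ε → ∃ r₀ : ℕ, 1 ≤ r₀ ∧ ∀ r : ℕ, r₀ ≤ r →
      ∃ K : ℕ, 1 ≤ K ∧ ∀ k : ℕ, K ≤ k → Q r k ≤ ε :=
  statement2_general D hint hindep hident hμpos hmom3 htail Q hQ
end

section
/- Let (M, d) be a metric space and let S = (s_1, ..., s_m) and T = (t_1, ..., t_n) be nonempty finite sequences in M. Then Σ_{i=1}^m min_{1≤j≤n} d(s_i, t_j)² ≤ DTW(S, T). -/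
/-!
Charge each point of `S` the squared distance to its nearest point of `T`; the total charge grows
when `S` grows or `T` shrinks. In the DTW recursion the head `s₁` pays `d(s₁, t₁)²`, at least its
charge, and each of the three recursive calls bounds, by induction, a total charge at least that of
`Tail S` against `T`. The empty cases cost `∞`.
-/

open scoped ENNReal

/-- Dynamic time warping distance on finite sequences over a metric space, with squared
ground distances; by convention `DTW` of an empty sequence is `∞`. -/
noncomputable def DTW {M : Type*} [MetricSpace M] : List M → List M → ℝ≥0∞
  | [], _ => ⊤
  | _ :: _, [] => ⊤
  | [s], [t] => ENNReal.ofReal (dist s t ^ 2)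
  | s :: S, t :: T =>
      ENNReal.ofReal (dist s t ^ 2) +
        min (DTW S T) (min (DTW S (t :: T)) (DTW (s :: S) T))
termination_by S T => S.length + T.length
decreasing_by all_goals (simp <;> omega)

section

variable {M : Type*} [MetricSpace M]

/-- Unlike the real infimum over an empty index type (junk value `0`), the infimum over an empty
`T` here is `∞`. -/
noncomputable def nearestCost (S T : List M) : ℝ≥0∞ :=
  (S.map fun s => ⨅ t ∈ T, ENNReal.ofReal (dist s t ^ 2)).sum

lemma nearestCost_cons_left (s : M) (S T : List M) :
    nearestCost (s :: S) T = (⨅ t ∈ T, ENNReal.ofReal (dist s t ^ 2)) + nearestCost S T :=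
  List.sum_cons

lemma nearestCost_antitone_right (S : List M) {T T' : List M} (h : T ⊆ T') :
    nearestCost S T' ≤ nearestCost S T :=
  List.sum_le_sum fun _ _ => iInf_mono' fun t => ⟨t, iInf_mono' fun ht => ⟨h ht, le_rfl⟩⟩

lemma nearestCost_le_cons_left (s : M) (S T : List M) :
    nearestCost S T ≤ nearestCost (s :: S) T := by
  rw [nearestCost_cons_left]
  exact le_add_self

lemma nearestCost_le_DTW (S T : List M) : nearestCost S T ≤ DTW S T := by
  induction S, T using DTW.induct with
  | case1 T => rw [DTW]; exact le_top
  | case2 s S => rw [DTW]; exact le_top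
  | case3 s t => simp [nearestCost, DTW]
  | case4 s S t T hST ih_tails ih_tail_left ih_tail_right =>
    rw [DTW.eq_4 s S t T hST, nearestCost_cons_left]
    have head : ⨅ t' ∈ t :: T, ENNReal.ofReal (dist s t' ^ 2) ≤ ENNReal.ofReal (dist s t ^ 2) :=
      iInf₂_le t List.mem_cons_self
    have drop_t := nearestCost_antitone_right S (List.subset_cons_self t T)
    refine add_le_add head (le_min ?_ (le_min ih_tail_left ?_))
    · exact drop_t.trans ih_tails
    · exact (drop_t.trans (nearestCost_le_cons_left s S T)).trans ih_tail_right

lemma ofReal_sum_iInf_sq_dist_le_nearestCost (S T : List M) :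
    ENNReal.ofReal (∑ i : Fin S.length, ⨅ j : Fin T.length, dist (S.get i) (T.get j) ^ 2)
      ≤ nearestCost S T := by
  rw [ENNReal.ofReal_sum_of_nonneg fun _ _ => Real.iInf_nonneg fun _ => sq_nonneg _, nearestCost,
    ← Fin.sum_univ_fun_getElem]
  refine Finset.sum_le_sum fun i _ => le_iInf₂ fun t ht => ?_
  obtain ⟨j, rfl⟩ := List.get_of_mem ht
  exact ENNReal.ofReal_le_ofReal (ciInf_le (Finite.bddBelow_range _) j)

end

theorem statement9_general
    {M : Type*} [MetricSpace M] (S T : List M) :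
    ENNReal.ofReal
        (∑ i : Fin S.length, ⨅ j : Fin T.length, dist (S.get i) (T.get j) ^ 2)
      ≤ DTW S T :=
  (ofReal_sum_iInf_sq_dist_le_nearestCost S T).trans (nearestCost_le_DTW S T)

/-- `Σ_i min_j d(s_i, t_j)² ≤ DTW(S, T)` for nonempty sequences `S`, `T`. -/
theorem statement9
    {M : Type*} [MetricSpace M] (S T : List M) (hS : S ≠ []) (hT : T ≠ []) :
    ENNReal.ofReal
        (∑ i : Fin S.length, ⨅ j : Fin T.length, dist (S.get i) (T.get j) ^ 2)
      ≤ DTW S T :=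
  statement9_general S T
end

section
/- Let d ≥ 1, let S = (s_1, ..., s_n) and T = (t_1, ..., t_n) be sequences in ℝ^d of equal length n ≥ 1, and let r ∈ ℕ. For 1 ≤ i ≤ n let W_i = { ℓ : 1 ≤ ℓ ≤ n and |i − ℓ| ≤ r } and let B_i = Π_{j=1}^d [ min_{ℓ∈W_i} t_{ℓ,j}, max_{ℓ∈W_i} t_{ℓ,j} ]. Then for every warping path p = ((i_1,j_1), ..., (i_L,j_L)) for lengths n and n satisfying |i_c − j_c| ≤ r for all 1 ≤ c ≤ L, it holds that Σ_{c=1}^L ‖s_{i_c} − t_{j_c}‖₂² ≥ Σ_{i=1}^n dist(s_i, B_i)². In particular, LB_Box(S,T) = Σ_{i=1}^n dist(s_i, B_i)² is a lower bound to DTW with Sakoe-Chiba band width r. -/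
open scoped ENNReal

/-- One admissible step of a warping path: the index pair increases by
`(1,0)`, `(0,1)` or `(1,1)`. -/
def WarpStep (a b : ℕ × ℕ) : Prop :=
  (b.1 = a.1 + 1 ∧ b.2 = a.2) ∨ (b.1 = a.1 ∧ b.2 = a.2 + 1) ∨
    (b.1 = a.1 + 1 ∧ b.2 = a.2 + 1)

/-- A warping path for lengths `m` and `n` (1-indexed): it starts at `(1,1)`, ends at `(m,n)`,
and each consecutive pair of index pairs differs by `(1,0)`, `(0,1)` or `(1,1)`. -/
def IsWarpingPath (m n : ℕ) (p : List (ℕ × ℕ)) : Prop :=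
  p.head? = some (1, 1) ∧ p.getLast? = some (m, n) ∧ List.Chain' WarpStep p


private lemma warpStep_le {a b : ℕ × ℕ} (h : WarpStep a b) :
    a.1 ≤ b.1 ∧ a.2 ≤ b.2 ∧ a.1 + a.2 < b.1 + b.2 ∧ b.1 ≤ a.1 + 1 := by
  rcases h with ⟨h1, h2⟩ | ⟨h1, h2⟩ | ⟨h1, h2⟩ <;> omega

private def Rr (a b : ℕ × ℕ) : Prop := a.1 ≤ b.1 ∧ a.2 ≤ b.2 ∧ a.1 + a.2 < b.1 + b.2

instance : IsTrans (ℕ × ℕ) Rr := ⟨fun a b c h1 h2 =>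
  ⟨h1.1.trans h2.1, h1.2.1.trans h2.2.1, h1.2.2.trans h2.2.2⟩⟩

private lemma warp_pairwise {p : List (ℕ × ℕ)} (hc : List.Chain' WarpStep p) :
    p.Pairwise Rr := by
  refine List.isChain_iff_pairwise.mp (hc.imp fun a b h => ?_)
  obtain ⟨h1, h2, h3, _⟩ := warpStep_le h
  exact ⟨h1, h2, h3⟩

private lemma warp_nodup {p : List (ℕ × ℕ)} (hc : List.Chain' WarpStep p) :
    p.Nodup := by
  refine (warp_pairwise hc).imp fun h he => ?_
  subst he
  exact absurd h.2.2 (lt_irrefl _)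

private lemma mem_bounds :
    ∀ (p : List (ℕ × ℕ)), List.Chain' WarpStep p → ∀ a z : ℕ × ℕ, p.head? = some a →
      p.getLast? = some z → ∀ c ∈ p, a.1 ≤ c.1 ∧ a.2 ≤ c.2 ∧ c.1 ≤ z.1 ∧ c.2 ≤ z.2 := by
  intro p
  induction p with
  | nil => simp
  | cons x tail ih =>
    intro hc a z ha hz c hcmem
    simp only [List.head?_cons, Option.some.injEq] at ha
    subst ha
    cases tail with
    | nil =>
      simp only [List.getLast?_singleton, Option.some.injEq] at hz
      subst hz
      simp only [List.mem_singleton] at hcmem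
      subst hcmem
      exact ⟨le_refl _, le_refl _, le_refl _, le_refl _⟩
    | cons y rest =>
      rw [List.getLast?_cons_cons] at hz
      obtain ⟨hxy, hc'⟩ := List.isChain_cons_cons.mp hc
      obtain ⟨hxy1, hxy2, _, _⟩ := warpStep_le hxy
      have ihy := ih hc' y z rfl hz
      rcases List.mem_cons.mp hcmem with he | hm
      · subst he
        obtain ⟨_, _, hy1, hy2⟩ := ihy y (List.mem_cons_self)
        exact ⟨le_refl _, le_refl _, hxy1.trans hy1, hxy2.trans hy2⟩
      · obtain ⟨h1, h2, h3, h4⟩ := ihy c hm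
        exact ⟨hxy1.trans h1, hxy2.trans h2, h3, h4⟩

private lemma exists_fst :
    ∀ (p : List (ℕ × ℕ)), List.Chain' WarpStep p → ∀ a z : ℕ × ℕ, ∀ i : ℕ, p.head? = some a →
      p.getLast? = some z → a.1 ≤ i → i ≤ z.1 → ∃ c ∈ p, c.1 = i := by
  intro p
  induction p with
  | nil => simp
  | cons x tail ih =>
    intro hc a z i ha hz h1 h2
    simp only [List.head?_cons, Option.some.injEq] at ha
    subst ha
    cases tail with
    | nil =>
      simp only [List.getLast?_singleton, Option.some.injEq] at hz
      subst hz
      exact ⟨x, List.mem_singleton_self _, le_antisymm h1 h2⟩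
    | cons y rest =>
      rcases Nat.eq_or_lt_of_le h1 with he | hlt
      · exact ⟨x, List.mem_cons_self, he⟩
      · rw [List.getLast?_cons_cons] at hz
        obtain ⟨hxy, hc'⟩ := List.isChain_cons_cons.mp hc
        obtain ⟨_, _, _, hy1⟩ := warpStep_le hxy
        obtain ⟨c, hcmem, hceq⟩ := ih hc' y z i rfl hz (by omega) h2
        exact ⟨c, List.mem_cons_of_mem _ hcmem, hceq⟩
/-- for equal-length `d`-dimensional time series `s`, `t` (1-indexed, entries
`s 1, …, s n` and `t 1, …, t n`), with `B i` the minimal bounding box of the Sakoe-Chiba window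
`W i = {ℓ : 1 ≤ ℓ ≤ n, |i − ℓ| ≤ r}`, every warping path `p` staying inside the band `|i − j| ≤ r`
has cost `Σ_c ‖s i_c − t j_c‖₂²` at least `LB_Box(S,T) = Σ_i dist(s i, B i)²`. -/
theorem statement10
    (d n : ℕ) (hd : 1 ≤ d) (hn : 1 ≤ n) (r : ℕ)
    (s t : ℕ → EuclideanSpace ℝ (Fin d))
    (l u : ℕ → Fin d → ℝ)
    (hl : ∀ i j, l i j =
        sInf ((fun ℓ => t ℓ j) '' {ℓ : ℕ | ℓ ∈ Finset.Icc 1 n ∧ |(i : ℤ) - (ℓ : ℤ)| ≤ (r : ℤ)}))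
    (hu : ∀ i j, u i j =
        sSup ((fun ℓ => t ℓ j) '' {ℓ : ℕ | ℓ ∈ Finset.Icc 1 n ∧ |(i : ℤ) - (ℓ : ℤ)| ≤ (r : ℤ)}))
    (B : ℕ → Set (EuclideanSpace ℝ (Fin d)))
    (hB : ∀ i, B i = { x | ∀ j, l i j ≤ x j ∧ x j ≤ u i j })
    (p : List (ℕ × ℕ))
    (hp : IsWarpingPath n n p)
    (hband : ∀ c ∈ p, |(c.1 : ℤ) - (c.2 : ℤ)| ≤ (r : ℤ)) :
    ∑ i ∈ Finset.Icc 1 n, Metric.infDist (s i) (B i) ^ 2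
      ≤ (p.map (fun c => ‖s c.1 - t c.2‖ ^ 2)).sum := by
  classical
  obtain ⟨hhead, hlast, hchain⟩ := hp
  have hbounds := mem_bounds p hchain (1, 1) (n, n) hhead hlast
  have hnd : p.Nodup := warp_nodup hchain
  -- the box contains the relevant t-point
  have hbox : ∀ c ∈ p, t c.2 ∈ B c.1 := by
    intro c hc
    obtain ⟨h1, h2, h3, h4⟩ := hbounds c hc
    rw [hB]
    intro j
    have hWfin : ({ℓ : ℕ | ℓ ∈ Finset.Icc 1 n ∧ |(c.1 : ℤ) - (ℓ : ℤ)| ≤ (r : ℤ)}).Finite :=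
      Set.Finite.subset (Finset.Icc 1 n).finite_toSet (fun x hx => hx.1)
    have hmemW : c.2 ∈ {ℓ : ℕ | ℓ ∈ Finset.Icc 1 n ∧ |(c.1 : ℤ) - (ℓ : ℤ)| ≤ (r : ℤ)} :=
      ⟨Finset.mem_Icc.mpr ⟨h2, h4⟩, hband c hc⟩
    have hmemI : t c.2 j ∈ (fun ℓ => t ℓ j) ''
        {ℓ : ℕ | ℓ ∈ Finset.Icc 1 n ∧ |(c.1 : ℤ) - (ℓ : ℤ)| ≤ (r : ℤ)} := ⟨c.2, hmemW, rfl⟩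
    constructor
    · rw [hl]; exact csInf_le ((hWfin.image _).bddBelow) hmemI
    · rw [hu]; exact le_csSup ((hWfin.image _).bddAbove) hmemI
  have hdist : ∀ c ∈ p, Metric.infDist (s c.1) (B c.1) ^ 2 ≤ ‖s c.1 - t c.2‖ ^ 2 := by
    intro c hc
    have h1 : Metric.infDist (s c.1) (B c.1) ≤ ‖s c.1 - t c.2‖ := by
      rw [← dist_eq_norm]
      exact Metric.infDist_le_dist_of_mem (hbox c hc)
    exact pow_le_pow_left₀ Metric.infDist_nonneg h1 2
  have key : ∀ i : ℕ, ∃ c : ℕ × ℕ, i ∈ Finset.Icc 1 n → c ∈ p ∧ c.1 = i := by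
    intro i
    by_cases hi : i ∈ Finset.Icc 1 n
    · obtain ⟨c, hcp, hci⟩ := exists_fst p hchain (1, 1) (n, n) i hhead hlast
        (Finset.mem_Icc.mp hi).1 (Finset.mem_Icc.mp hi).2
      exact ⟨c, fun _ => ⟨hcp, hci⟩⟩
    · exact ⟨(0, 0), fun h => absurd h hi⟩
  choose f hf using key
  have step1 : ∑ i ∈ Finset.Icc 1 n, Metric.infDist (s i) (B i) ^ 2
      ≤ ∑ i ∈ Finset.Icc 1 n, ‖s (f i).1 - t (f i).2‖ ^ 2 := by
    apply Finset.sum_le_sum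
    intro i hi
    obtain ⟨hfp, hfi⟩ := hf i hi
    rw [hfi]
    have h := hdist (f i) hfp
    rwa [hfi] at h
  have step2 : ∑ i ∈ Finset.Icc 1 n, ‖s (f i).1 - t (f i).2‖ ^ 2
      = ∑ c ∈ (Finset.Icc 1 n).image f, ‖s c.1 - t c.2‖ ^ 2 := by
    rw [Finset.sum_image]
    intro x hx y hy hxy
    have h1 := (hf x hx).2
    have h2 := (hf y hy).2
    rw [← h1, ← h2, hxy]
  have hsub : (Finset.Icc 1 n).image f ⊆ p.toFinset := by
    intro c hc
    obtain ⟨i, hi, hfi⟩ := Finset.mem_image.mp hc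
    rw [List.mem_toFinset, ← hfi]
    exact (hf i hi).1
  have step3 : ∑ c ∈ (Finset.Icc 1 n).image f, ‖s c.1 - t c.2‖ ^ 2
      ≤ ∑ c ∈ p.toFinset, ‖s c.1 - t c.2‖ ^ 2 :=
    Finset.sum_le_sum_of_subset_of_nonneg hsub (fun c _ _ => by positivity)
  have step4 : ∑ c ∈ p.toFinset, ‖s c.1 - t c.2‖ ^ 2
      = (p.map (fun c => ‖s c.1 - t c.2‖ ^ 2)).sum :=
    List.sum_toFinset _ hnd
  linarith
end

section
/- Let (M, d) be a metric space and let S = (s_1, ..., s_m) and T = (t_1, ..., t_n) be nonempty finite sequences in M. Then DTW(S, T) equals the minimum, over all warping paths p = ((i_1,j_1), ..., (i_L,j_L)) for lengths m and n, of Σ_{c=1}^L d(s_{i_c}, t_{j_c})². -/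
open scoped ENNReal

namespace S15

def shift (v c : ℕ × ℕ) : ℕ × ℕ := (c.1 + v.1, c.2 + v.2)

def Path (a b : ℕ × ℕ) (p : List (ℕ × ℕ)) : Prop :=
  p.head? = some a ∧ p.getLast? = some b ∧ List.Chain' WarpStep p

noncomputable def cost (f : ℕ × ℕ → ℝ≥0∞) (p : List (ℕ × ℕ)) : ℝ≥0∞ := (p.map f).sum

lemma warpStep_shift {v a b : ℕ × ℕ} : WarpStep (shift v a) (shift v b) ↔ WarpStep a b := by
  simp only [WarpStep, shift]; omega

lemma chain_shift {v : ℕ × ℕ} {p : List (ℕ × ℕ)} :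
    List.Chain' WarpStep (p.map (shift v)) ↔ List.Chain' WarpStep p := by
  unfold List.Chain'
  rw [List.isChain_map]
  constructor
  · intro h; exact h.imp fun {a b} hab => warpStep_shift.mp hab
  · intro h; exact h.imp fun {a b} hab => warpStep_shift.mpr hab

lemma chain_ge {a : ℕ × ℕ} : ∀ {p : List (ℕ × ℕ)}, List.Chain' WarpStep (a :: p) →
    ∀ c ∈ a :: p, a.1 ≤ c.1 ∧ a.2 ≤ c.2 := by
  intro p
  induction p generalizing a with
  | nil => intro _ c hc; simp at hc; subst hc; omega
  | cons b q ih =>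
    intro h c hc
    rw [List.Chain', List.isChain_cons_cons] at h
    rcases List.mem_cons.mp hc with rfl | hc
    · omega
    · have := ih h.2 c hc
      have hab := h.1
      simp only [WarpStep] at hab
      omega

lemma path_unshift {v a b : ℕ × ℕ} {p : List (ℕ × ℕ)} (h : Path (shift v a) (shift v b) p) :
    ∃ q, Path a b q ∧ p = q.map (shift v) := by
  obtain ⟨h1, h2, h3⟩ := h
  have hne : p ≠ [] := by rintro rfl; simp at h1
  have hhd : p.head hne = shift v a := by
    rw [← Option.some_inj, ← List.head?_eq_head]; exact h1
  have hge : ∀ c ∈ p, (p.head hne).1 ≤ c.1 ∧ (p.head hne).2 ≤ c.2 := by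
    have := chain_ge (a := p.head hne) (p := p.tail)
      (by rw [List.cons_head_tail]; exact h3)
    intro c hc
    exact this c (by rw [List.cons_head_tail]; exact hc)
  set q := p.map (fun c => (c.1 - v.1, c.2 - v.2)) with hq
  have hpq : p = q.map (shift v) := by
    rw [hq, List.map_map]
    conv_lhs => rw [show p = p.map id from (List.map_id _).symm]
    apply List.map_congr_left
    intro c hc
    have hb := hge c hc
    rw [hhd] at hb
    simp only [Function.comp, shift, id_eq] at *
    ext <;> simp <;> omega
  refine ⟨q, ⟨?_, ?_, ?_⟩, hpq⟩
  · rw [hq, List.head?_map, h1]; simp [shift]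
  · rw [hq, List.getLast?_map, h2]; simp [shift]
  · rw [hpq] at h3; exact chain_shift.mp h3

lemma cost_cons (f : ℕ × ℕ → ℝ≥0∞) (c : ℕ × ℕ) (p : List (ℕ × ℕ)) :
    cost f (c :: p) = f c + cost f p := by simp [cost]

lemma cost_map_shift (f : ℕ × ℕ → ℝ≥0∞) (v : ℕ × ℕ) (p : List (ℕ × ℕ)) :
    cost f (p.map (shift v)) = cost (f ∘ shift v) p := by
  simp [cost, List.map_map]

variable {M : Type*} [MetricSpace M]

noncomputable def g (S T : List M) (dS dT : M) (c : ℕ × ℕ) : ℝ≥0∞ :=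
  ENNReal.ofReal (dist (S.getD c.1 dS) (T.getD c.2 dT) ^ 2)

lemma g_shift11 (s t : M) (S T : List M) (dS dT : M) :
    g (s :: S) (t :: T) dS dT ∘ shift (1, 1) = g S T dS dT := by
  funext c; simp [g, shift]

lemma g_shift10 (s : M) (S T : List M) (dS dT : M) :
    g (s :: S) T dS dT ∘ shift (1, 0) = g S T dS dT := by
  funext c; simp [g, shift]

lemma g_shift01 (t : M) (S T : List M) (dS dT : M) :
    g S (t :: T) dS dT ∘ shift (0, 1) = g S T dS dT := by
  funext c; simp [g, shift]

lemma ofReal_list_sum {α : Type*} (h : α → ℝ) (hn : ∀ a, 0 ≤ h a) (l : List α) :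
    ENNReal.ofReal ((l.map h).sum) = (l.map (fun a => ENNReal.ofReal (h a))).sum := by
  induction l with
  | nil => simp
  | cons a l ih =>
    simp only [List.map_cons, List.sum_cons, ← ih]
    have hs : 0 ≤ (l.map h).sum := List.sum_nonneg (by
      simp only [List.mem_map]
      rintro x ⟨y, _, rfl⟩
      exact hn y)
    rw [ENNReal.ofReal_add (hn a) hs]

lemma DTW_nil_left (T : List M) : DTW ([] : List M) T = ⊤ := by rw [DTW]

lemma DTW_nil_right (S : List M) : DTW S ([] : List M) = ⊤ := by
  cases S <;> rw [DTW]

lemma DTW_single (s t : M) : DTW [s] [t] = ENNReal.ofReal (dist s t ^ 2) := by rw [DTW]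

lemma DTW_cons_cons (s t : M) (S T : List M) (h : S ≠ [] ∨ T ≠ []) :
    DTW (s :: S) (t :: T) = ENNReal.ofReal (dist s t ^ 2) +
        min (DTW S T) (min (DTW S (t :: T)) (DTW (s :: S) T)) := by
  match S, T, h with
  | a :: S, T, _ => rw [DTW]; simp
  | [], b :: T, _ => rw [DTW]; simp [DTW]

lemma main (n : ℕ) : ∀ S T : List M, S.length + T.length ≤ n → S ≠ [] → T ≠ [] →
    ∀ dS dT : M,
    IsLeast {x | ∃ p, Path (0, 0) (S.length - 1, T.length - 1) p ∧
      x = cost (g S T dS dT) p} (DTW S T) := by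
  induction n with
  | zero =>
    intro S T hlen hS hT
    cases S with
    | nil => exact absurd rfl hS
    | cons a S => simp at hlen
  | succ n ih =>
    rintro (_ | ⟨s, S'⟩) T hlen hS hT dS dT
    · exact absurd rfl hS
    cases T with
    | nil => exact absurd rfl hT
    | cons t T' =>
    by_cases hST : S' = [] ∧ T' = []
    · obtain ⟨rfl, rfl⟩ := hST
      constructor
      · refine ⟨[(0, 0)], ⟨rfl, rfl, ?_⟩, ?_⟩
        · simp [List.Chain']
        · simp [cost, g, DTW_single]
      · rintro x ⟨p, ⟨h1, h2, h3⟩, rfl⟩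
        have hne : p ≠ [] := by rintro rfl; simp at h1
        obtain ⟨c, q, rfl⟩ := List.exists_cons_of_ne_nil hne
        have hc : c = (0, 0) := by simpa using h1
        subst hc
        cases q with
        | nil =>
          simp only [DTW_single, cost_cons, cost, List.map_nil, List.sum_nil, add_zero]
          simp [g]
        | cons c q' =>
          exfalso
          have hw : WarpStep (0, 0) c := (List.isChain_cons_cons.mp h3).1
          have hch : List.Chain' WarpStep (c :: q') := (List.isChain_cons_cons.mp h3).2
          have hlast : (c :: q').getLast? = some ((0 : ℕ), (0 : ℕ)) := by
            simpa using h2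
          have hmem := List.mem_of_getLast? hlast
          have := chain_ge hch _ hmem
          simp only [WarpStep] at hw
          omega
    · have hor : S' ≠ [] ∨ T' ≠ [] := by tauto
      have heq := DTW_cons_cons s t S' T' hor
      have hg00 : g (s :: S') (t :: T') dS dT (0, 0) = ENNReal.ofReal (dist s t ^ 2) := by
        simp [g]
      -- builder for membership
      have build : ∀ (S₂ T₂ : List M) (v : ℕ × ℕ), S₂ ≠ [] → T₂ ≠ [] →
          S₂.length + T₂.length ≤ n → WarpStep (0, 0) v →
          shift v (S₂.length - 1, T₂.length - 1) =
            ((s :: S').length - 1, (t :: T').length - 1) →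
          g (s :: S') (t :: T') dS dT ∘ shift v = g S₂ T₂ dS dT →
          ∃ p, Path (0, 0) ((s :: S').length - 1, (t :: T').length - 1) p ∧
            cost (g (s :: S') (t :: T') dS dT) p =
              ENNReal.ofReal (dist s t ^ 2) + DTW S₂ T₂ := by
        intro S₂ T₂ v h1 h2 h3 h4 h5 h6
        obtain ⟨⟨q, hq, hcq⟩, -⟩ := ih S₂ T₂ h3 h1 h2 dS dT
        have hqne : q ≠ [] := by rintro rfl; simp [Path] at hq
        refine ⟨(0, 0) :: q.map (shift v), ⟨rfl, ?_, ?_⟩, ?_⟩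
        · obtain ⟨c, q', rfl⟩ := List.exists_cons_of_ne_nil hqne
          rw [List.map_cons, List.getLast?_cons_cons, ← List.map_cons, List.getLast?_map,
            hq.2.1]
          simp [h5]
        · refine List.isChain_cons.mpr ⟨?_, chain_shift.mpr hq.2.2⟩
          intro b hb
          rw [List.head?_map, hq.1] at hb
          have hb' : b = shift v (0, 0) := by
            simpa [eq_comm] using hb
          rw [hb']
          simpa [shift] using h4
        · rw [cost_cons, cost_map_shift, h6, ← hcq, hg00]
      constructor
      · -- membership
        by_cases hS' : S' = []
        · subst hS'
          have hT' : T' ≠ [] := by tauto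
          obtain ⟨p, hp, hc⟩ := build [s] T' (0, 1) (by simp) hT'
            (by simp at hlen ⊢; omega) (by simp [WarpStep])
            (by
              have := List.length_pos_iff.mpr hT'
              simp [shift]
              omega)
            (g_shift01 t [s] T' dS dT)
          refine ⟨p, hp, ?_⟩
          rw [hc, heq, DTW_nil_left, DTW_nil_left]
          simp
        · by_cases hT' : T' = []
          · subst hT'
            obtain ⟨p, hp, hc⟩ := build S' [t] (1, 0) hS' (by simp)
              (by simp at hlen ⊢; omega) (by simp [WarpStep])
              (by
                have := List.length_pos_iff.mpr hS'
                simp [shift]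
                omega)
              (g_shift10 s S' [t] dS dT)
            refine ⟨p, hp, ?_⟩
            rw [hc, heq, DTW_nil_right, DTW_nil_right]
            simp
          · have hlS := List.length_pos_iff.mpr hS'
            have hlT := List.length_pos_iff.mpr hT'
            have hlen' : S'.length + T'.length + 2 ≤ n + 1 := by simp at hlen; omega
            rcases le_total (DTW S' T') (min (DTW S' (t :: T')) (DTW (s :: S') T')) with
              h | h
            · obtain ⟨p, hp, hc⟩ := build S' T' (1, 1) hS' hT' (by omega)
                (by simp [WarpStep]) (by simp [shift]; omega)
                (g_shift11 s t S' T' dS dT)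
              exact ⟨p, hp, by rw [hc, heq, min_eq_left h]⟩
            · rcases le_total (DTW S' (t :: T')) (DTW (s :: S') T') with h2 | h2
              · obtain ⟨p, hp, hc⟩ := build S' (t :: T') (1, 0) hS' (by simp)
                  (by simp at hlen ⊢; omega) (by simp [WarpStep])
                  (by simp [shift]; omega) (g_shift10 s S' (t :: T') dS dT)
                refine ⟨p, hp, ?_⟩
                rw [hc, heq, min_eq_right h, min_eq_left h2]
              · obtain ⟨p, hp, hc⟩ := build (s :: S') T' (0, 1) (by simp) hT'
                  (by simp at hlen ⊢; omega) (by simp [WarpStep])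
                  (by simp [shift]; omega) (g_shift01 t (s :: S') T' dS dT)
                refine ⟨p, hp, ?_⟩
                rw [hc, heq, min_eq_right h, min_eq_right h2]
      · -- lower bound
        rintro x ⟨p, ⟨h1, h2, h3⟩, rfl⟩
        have hne : p ≠ [] := by rintro rfl; simp at h1
        obtain ⟨c, q, rfl⟩ := List.exists_cons_of_ne_nil hne
        have hc : c = (0, 0) := by simpa using h1
        subst hc
        cases q with
        | nil =>
          exfalso
          have : ((s :: S').length - 1, (t :: T').length - 1) = ((0 : ℕ), (0 : ℕ)) := by
            simpa using h2.symm
          have h1' : S'.length = 0 := by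
            have := congrArg Prod.fst this
            simpa using this
          have h2' : T'.length = 0 := by
            have := congrArg Prod.snd this
            simpa using this
          exact hST ⟨List.length_eq_zero_iff.mp h1', List.length_eq_zero_iff.mp h2'⟩
        | cons c q' =>
          have hw : WarpStep (0, 0) c := (List.isChain_cons_cons.mp h3).1
          have hch : List.Chain' WarpStep (c :: q') := (List.isChain_cons_cons.mp h3).2
          have hlast : (c :: q').getLast? =
              some ((s :: S').length - 1, (t :: T').length - 1) := by simpa using h2
          have hmem := List.mem_of_getLast? hlast
          have hge := chain_ge hch _ hmem
          have hhead : (c :: q').head? = some c := rfl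
          -- builder for lower bound
          have lb : ∀ (S₂ T₂ : List M) (v : ℕ × ℕ), S₂ ≠ [] → T₂ ≠ [] →
              S₂.length + T₂.length ≤ n → c = shift v (0, 0) →
              shift v (S₂.length - 1, T₂.length - 1) =
                ((s :: S').length - 1, (t :: T').length - 1) →
              g (s :: S') (t :: T') dS dT ∘ shift v = g S₂ T₂ dS dT →
              ENNReal.ofReal (dist s t ^ 2) + DTW S₂ T₂ ≤
                cost (g (s :: S') (t :: T') dS dT) ((0, 0) :: c :: q') := by
            intro S₂ T₂ v hn1 hn2 hn3 hcv hend hgc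
            have hpath : Path (shift v (0, 0)) (shift v (S₂.length - 1, T₂.length - 1))
                (c :: q') := ⟨by rw [hhead, hcv], by rw [hlast, hend], hch⟩
            obtain ⟨q₀, hq₀, hmap⟩ := path_unshift hpath
            obtain ⟨-, hlb⟩ := ih S₂ T₂ hn3 hn1 hn2 dS dT
            have := hlb ⟨q₀, hq₀, rfl⟩
            rw [cost_cons, hg00, hmap, cost_map_shift, hgc]
            exact add_le_add_right this _
          simp only [WarpStep] at hw
          rw [heq]
          rcases hw with ⟨hw1, hw2⟩ | ⟨hw1, hw2⟩ | ⟨hw1, hw2⟩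
          · -- c = (1,0) : branch DTW S' (t::T')
            have hS' : S' ≠ [] := by
              intro h; subst h
              simp at hlast hge ⊢
              omega
            have hlS := List.length_pos_iff.mpr hS'
            refine le_trans (add_le_add_right ?_ _)
              (lb S' (t :: T') (1, 0) hS' (by simp) (by simp at hlen ⊢; omega)
                (by ext <;> simp [shift] <;> omega) (by simp [shift]; omega)
                (g_shift10 s S' (t :: T') dS dT))
            exact le_trans (min_le_right _ _) (min_le_left _ _)
          · -- c = (0,1) : branch DTW (s::S') T'
            have hT' : T' ≠ [] := by
              intro h; subst h
              simp at hlast hge ⊢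
              omega
            have hlT := List.length_pos_iff.mpr hT'
            refine le_trans (add_le_add_right ?_ _)
              (lb (s :: S') T' (0, 1) (by simp) hT' (by simp at hlen ⊢; omega)
                (by ext <;> simp [shift] <;> omega) (by simp [shift]; omega)
                (g_shift01 t (s :: S') T' dS dT))
            exact le_trans (min_le_right _ _) (min_le_right _ _)
          · -- c = (1,1) : branch DTW S' T'
            have hS' : S' ≠ [] := by
              intro h; subst h
              simp at hlast hge ⊢
              omega
            have hT' : T' ≠ [] := by
              intro h; subst h
              simp at hlast hge ⊢
              omega
            have hlS := List.length_pos_iff.mpr hS'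
            have hlT := List.length_pos_iff.mpr hT'
            refine le_trans (add_le_add_right ?_ _)
              (lb S' T' (1, 1) hS' hT' (by simp at hlen ⊢; omega)
                (by ext <;> simp [shift] <;> omega) (by simp [shift]; omega)
                (g_shift11 s t S' T' dS dT))
            exact min_le_left _ _

end S15

/-- for nonempty sequences `S`, `T`, `DTW(S,T)` is the minimum, over all warping
paths `p` for lengths `m = |S|` and `n = |T|`, of `Σ_c d(s_{i_c}, t_{j_c})²` (the minimum being
attained). -/
theorem statement15
    {M : Type*} [MetricSpace M] (S T : List M) (hS : S ≠ []) (hT : T ≠ []) :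
    IsLeast
      { x : ℝ≥0∞ | ∃ p : List (ℕ × ℕ), IsWarpingPath S.length T.length p ∧
          x = ENNReal.ofReal
            ((p.map (fun c =>
              dist (S.getD (c.1 - 1) (S.head hS)) (T.getD (c.2 - 1) (T.head hT)) ^ 2)).sum) }
      (DTW S T) := by
  classical
  obtain ⟨⟨q, hq, hcq⟩, hlb⟩ :=
    S15.main (M := M) (S.length + T.length) S T le_rfl hS hT (S.head hS) (T.head hT)
  have hlS := List.length_pos_iff.mpr hS
  have hlT := List.length_pos_iff.mpr hT
  have key : ∀ q₀ : List (ℕ × ℕ),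
      ENNReal.ofReal (((q₀.map (S15.shift (1, 1))).map (fun c =>
        dist (S.getD (c.1 - 1) (S.head hS)) (T.getD (c.2 - 1) (T.head hT)) ^ 2)).sum)
      = S15.cost (S15.g S T (S.head hS) (T.head hT)) q₀ := by
    intro q₀
    rw [S15.ofReal_list_sum _ (fun c => by positivity)]
    rw [List.map_map]
    unfold S15.cost S15.g
    congr 1
  constructor
  · refine ⟨q.map (S15.shift (1, 1)), ⟨?_, ?_, S15.chain_shift.mpr hq.2.2⟩, ?_⟩
    · rw [List.head?_map, hq.1]; simp [S15.shift]
    · rw [List.getLast?_map, hq.2.1]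
      have : S15.shift (1, 1) (S.length - 1, T.length - 1) = (S.length, T.length) := by
        ext <;> simp [S15.shift] <;> omega
      simp only [Option.map_some]
      exact congrArg some this
    · rw [key]; exact hcq
  · rintro x ⟨p, ⟨h1, h2, h3⟩, rfl⟩
    have hp : S15.Path (S15.shift (1, 1) (0, 0))
        (S15.shift (1, 1) (S.length - 1, T.length - 1)) p := by
      refine ⟨by simpa [S15.shift] using h1, ?_, h3⟩
      have : S15.shift (1, 1) (S.length - 1, T.length - 1) = (S.length, T.length) := by
        ext <;> simp [S15.shift] <;> omega
      rw [h2, this]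
    obtain ⟨q₀, hq₀, rfl⟩ := S15.path_unshift hp
    rw [key]
    exact hlb ⟨q₀, hq₀, rfl⟩
end

section
/- Let (M, d) be a metric space, let S = (s_1, ..., s_m) and T = (t_1, ..., t_n) be nonempty finite sequences in M, and define the warping matrix W by W(1,1) = d(s_1,t_1)², W(i,1) = W(i−1,1) + d(s_i,t_1)² for 2 ≤ i ≤ m, W(1,j) = W(1,j−1) + d(s_1,t_j)² for 2 ≤ j ≤ n, and W(i,j) = d(s_i,t_j)² + min{ W(i−1,j), W(i,j−1), W(i−1,j−1) } for 2 ≤ i ≤ m, 2 ≤ j ≤ n. Then W(m,n) = DTW(S,T), and for every fixed column index 1 ≤ j₀ ≤ n the column minimum min_{1≤i≤m} W(i, j₀) is a lower bound to DTW(S,T), i.e. min_{1≤i≤m} W(i, j₀) ≤ DTW(S,T). -/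
open scoped ENNReal

/-- The DTW warping matrix built from the (squared) ground-distance matrix `f`
(0-indexed: `warpMat f i j` is the paper's `W(i+1, j+1)`). -/
noncomputable def warpMat (f : ℕ → ℕ → ℝ) : ℕ → ℕ → ℝ
  | 0, 0 => f 0 0
  | i + 1, 0 => warpMat f i 0 + f (i + 1) 0
  | 0, j + 1 => warpMat f 0 j + f 0 (j + 1)
  | i + 1, j + 1 =>
      f (i + 1) (j + 1) +
        min (warpMat f i (j + 1)) (min (warpMat f (i + 1) j) (warpMat f i j))
termination_by i j => i + j
decreasing_by all_goals omega

section DTWlemmas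
variable {M : Type*} [MetricSpace M]

lemma DTW_nil (T : List M) : DTW ([] : List M) T = ⊤ := by simp [DTW]

lemma DTW_cons_nil (s : M) (S : List M) : DTW (s :: S) ([] : List M) = ⊤ := by simp [DTW]

lemma DTW_single (s t : M) : DTW [s] [t] = ENNReal.ofReal (dist s t ^ 2) := by simp [DTW]

lemma DTW_cons (s t : M) (S T : List M) (h : S ≠ [] ∨ T ≠ []) :
    DTW (s :: S) (t :: T) =
      ENNReal.ofReal (dist s t ^ 2) +
        min (DTW S T) (min (DTW S (t :: T)) (DTW (s :: S) T)) := by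
  match S, T with
  | [], [] => simp at h
  | a :: S, [] => simp [DTW]
  | [], a :: T => simp [DTW]
  | a :: S, b :: T => simp [DTW]
end DTWlemmas

lemma warpMat_nonneg (f : ℕ → ℕ → ℝ) (hf : ∀ i j, 0 ≤ f i j) : ∀ i j, 0 ≤ warpMat f i j := by
  intro i j
  induction i, j using warpMat.induct with
  | case1 => simpa [warpMat] using hf 0 0
  | case2 i ih => rw [warpMat]; exact add_nonneg ih (hf _ _)
  | case3 j ih => rw [warpMat]; exact add_nonneg ih (hf _ _)
  | case4 i j h1 h2 h3 =>
      rw [warpMat]; exact add_nonneg (hf _ _) (le_min h1 (le_min h2 h3))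

lemma warp_row (f : ℕ → ℕ → ℝ) : ∀ i, warpMat f (i + 1) 0 = f 0 0 + warpMat (fun a b => f (a + 1) b) i 0 := by
  intro i
  induction i with
  | zero => simp [warpMat]
  | succ i ih => rw [warpMat, ih]; rw [show warpMat (fun a b => f (a+1) b) (i+1) 0 = warpMat (fun a b => f (a+1) b) i 0 + f (i+2) 0 from by rw [warpMat]]; ring

lemma warp_col (f : ℕ → ℕ → ℝ) : ∀ j, warpMat f 0 (j + 1) = f 0 0 + warpMat (fun a b => f a (b + 1)) 0 j := by
  intro j
  induction j with
  | zero => simp [warpMat]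
  | succ j ih => rw [warpMat, ih]; rw [show warpMat (fun a b => f a (b+1)) 0 (j+1) = warpMat (fun a b => f a (b+1)) 0 j + f 0 (j+2) from by rw [warpMat]]; ring

lemma min_helper1 (c F A B C D E : ℝ) :
    F + min (c + D) (min (c + min A (min B C)) (c + E)) =
      c + min (A + F) (min (B + F) (F + min D (min C E))) := by
  rw [min_add_add_left, min_add_add_left, add_comm F (min D (min C E)), min_add_add_right, min_add_add_right]
  rw [show min D (min (min A (min B C)) E) = min A (min B (min D (min C E))) from by
    apply le_antisymm <;> simp only [le_min_iff, min_le_iff] <;> simp]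
  ring

lemma min_helper2 (c F A B C D E : ℝ) :
    F + min (c + min A (min B C)) (min (c + D) (c + E)) =
      c + min (A + F) (min (F + min B (min D E)) (C + F)) := by
  rw [min_add_add_left, min_add_add_left, add_comm F (min B (min D E)), min_add_add_right,
    min_add_add_right]
  rw [show min (min A (min B C)) (min D E) = min A (min (min B (min D E)) C) from by
    apply le_antisymm <;> simp only [le_min_iff, min_le_iff] <;> simp]
  ring

lemma min_helper3 (c F A1 A2 A3 B1 B2 B3 C1 C2 C3 : ℝ) :
    F + min (c + min A1 (min A2 A3)) (min (c + min B1 (min B2 B3)) (c + min C1 (min C2 C3))) =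
      c + min (F + min A1 (min B1 C1)) (min (F + min A2 (min B2 C2)) (F + min A3 (min B3 C3))) := by
  simp only [min_add_add_left]
  rw [show min (min A1 (min A2 A3)) (min (min B1 (min B2 B3)) (min C1 (min C2 C3))) =
      min (min A1 (min B1 C1)) (min (min A2 (min B2 C2)) (min A3 (min B3 C3))) from by
    apply le_antisymm <;> simp only [le_min_iff, min_le_iff] <;> simp]
  ring

lemma warp_peel : ∀ (n : ℕ) (f : ℕ → ℕ → ℝ) (i j : ℕ), i + j ≤ n →
    warpMat f (i + 1) (j + 1) =
      f 0 0 + min (warpMat (fun a b => f (a + 1) (b + 1)) i j)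
        (min (warpMat (fun a b => f (a + 1) b) i (j + 1))
          (warpMat (fun a b => f a (b + 1)) (i + 1) j)) := by
  intro n
  induction n with
  | zero =>
      intro f i j h
      obtain ⟨rfl, rfl⟩ : i = 0 ∧ j = 0 := by omega
      simp only [warpMat, min_def]
      split_ifs <;> linarith
  | succ n ih =>
      intro f i j h
      match i, j with
      | 0, 0 =>
          simp only [warpMat, min_def]
          split_ifs <;> linarith
      | 0, j' + 1 =>
          have e1 : warpMat f 0 (j' + 1 + 1) = f 0 0 + warpMat (fun a b => f a (b + 1)) 0 (j' + 1) := warp_col f (j' + 1)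
          have e2 : warpMat f (0 + 1) (j' + 1) = f 0 0 + min (warpMat (fun a b => f (a + 1) (b + 1)) 0 j') (min (warpMat (fun a b => f (a + 1) b) 0 (j' + 1)) (warpMat (fun a b => f a (b + 1)) (0 + 1) j')) := ih f 0 j' (by omega)
          have e3 : warpMat f 0 (j' + 1) = f 0 0 + warpMat (fun a b => f a (b + 1)) 0 j' := warp_col f j'
          have r1 : warpMat (fun a b => f (a + 1) (b + 1)) 0 (j' + 1) = warpMat (fun a b => f (a + 1) (b + 1)) 0 j' + f (0 + 1) (j' + 1 + 1) := by conv_lhs => rw [warpMat]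
          have r2 : warpMat (fun a b => f (a + 1) b) 0 (j' + 1 + 1) = warpMat (fun a b => f (a + 1) b) 0 (j' + 1) + f (0 + 1) (j' + 1 + 1) := by conv_lhs => rw [warpMat]
          have r3 : warpMat (fun a b => f a (b + 1)) (0 + 1) (j' + 1) = f (0 + 1) (j' + 1 + 1) + min (warpMat (fun a b => f a (b + 1)) 0 (j' + 1)) (min (warpMat (fun a b => f a (b + 1)) (0 + 1) j') (warpMat (fun a b => f a (b + 1)) 0 j')) := by conv_lhs => rw [warpMat]
          conv_lhs => rw [warpMat]
          rw [e1, e2, e3, r1, r2, r3]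
          exact min_helper1 _ _ _ _ _ _ _
      | i' + 1, 0 =>
          have e1 : warpMat f (i' + 1) (0 + 1) = f 0 0 + min (warpMat (fun a b => f (a + 1) (b + 1)) i' 0) (min (warpMat (fun a b => f (a + 1) b) i' (0 + 1)) (warpMat (fun a b => f a (b + 1)) (i' + 1) 0)) := ih f i' 0 (by omega)
          have e2 : warpMat f (i' + 1 + 1) 0 = f 0 0 + warpMat (fun a b => f (a + 1) b) (i' + 1) 0 := warp_row f (i' + 1)
          have e3 : warpMat f (i' + 1) 0 = f 0 0 + warpMat (fun a b => f (a + 1) b) i' 0 := warp_row f i'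
          have r1 : warpMat (fun a b => f (a + 1) (b + 1)) (i' + 1) 0 = warpMat (fun a b => f (a + 1) (b + 1)) i' 0 + f (i' + 1 + 1) (0 + 1) := by conv_lhs => rw [warpMat]
          have r2 : warpMat (fun a b => f (a + 1) b) (i' + 1) (0 + 1) = f (i' + 1 + 1) (0 + 1) + min (warpMat (fun a b => f (a + 1) b) i' (0 + 1)) (min (warpMat (fun a b => f (a + 1) b) (i' + 1) 0) (warpMat (fun a b => f (a + 1) b) i' 0)) := by conv_lhs => rw [warpMat]
          have r3 : warpMat (fun a b => f a (b + 1)) (i' + 1 + 1) 0 = warpMat (fun a b => f a (b + 1)) (i' + 1) 0 + f (i' + 1 + 1) (0 + 1) := by conv_lhs => rw [warpMat]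
          conv_lhs => rw [warpMat]
          rw [e1, e2, e3, r1, r2, r3]
          exact min_helper2 _ _ _ _ _ _ _
      | i' + 1, j' + 1 =>
          have e1 : warpMat f (i' + 1) (j' + 1 + 1) = f 0 0 + min (warpMat (fun a b => f (a + 1) (b + 1)) i' (j' + 1)) (min (warpMat (fun a b => f (a + 1) b) i' (j' + 1 + 1)) (warpMat (fun a b => f a (b + 1)) (i' + 1) (j' + 1))) := ih f i' (j' + 1) (by omega)
          have e2 : warpMat f (i' + 1 + 1) (j' + 1) = f 0 0 + min (warpMat (fun a b => f (a + 1) (b + 1)) (i' + 1) j') (min (warpMat (fun a b => f (a + 1) b) (i' + 1) (j' + 1)) (warpMat (fun a b => f a (b + 1)) (i' + 1 + 1) j')) := ih f (i' + 1) j' (by omega)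
          have e3 : warpMat f (i' + 1) (j' + 1) = f 0 0 + min (warpMat (fun a b => f (a + 1) (b + 1)) i' j') (min (warpMat (fun a b => f (a + 1) b) i' (j' + 1)) (warpMat (fun a b => f a (b + 1)) (i' + 1) j')) := ih f i' j' (by omega)
          have r1 : warpMat (fun a b => f (a + 1) (b + 1)) (i' + 1) (j' + 1) = f (i' + 1 + 1) (j' + 1 + 1) + min (warpMat (fun a b => f (a + 1) (b + 1)) i' (j' + 1)) (min (warpMat (fun a b => f (a + 1) (b + 1)) (i' + 1) j') (warpMat (fun a b => f (a + 1) (b + 1)) i' j')) := by conv_lhs => rw [warpMat]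
          have r2 : warpMat (fun a b => f (a + 1) b) (i' + 1) (j' + 1 + 1) = f (i' + 1 + 1) (j' + 1 + 1) + min (warpMat (fun a b => f (a + 1) b) i' (j' + 1 + 1)) (min (warpMat (fun a b => f (a + 1) b) (i' + 1) (j' + 1)) (warpMat (fun a b => f (a + 1) b) i' (j' + 1))) := by conv_lhs => rw [warpMat]
          have r3 : warpMat (fun a b => f a (b + 1)) (i' + 1 + 1) (j' + 1) = f (i' + 1 + 1) (j' + 1 + 1) + min (warpMat (fun a b => f a (b + 1)) (i' + 1) (j' + 1)) (min (warpMat (fun a b => f a (b + 1)) (i' + 1 + 1) j') (warpMat (fun a b => f a (b + 1)) (i' + 1) j')) := by conv_lhs => rw [warpMat]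
          conv_lhs => rw [warpMat]
          rw [e1, e2, e3, r1, r2, r3]
          exact min_helper3 _ _ _ _ _ _ _ _ _ _ _


lemma dtw_eq {M : Type*} [MetricSpace M] :
    ∀ (n : ℕ) (S T : List M), S ≠ [] → T ≠ [] → ∀ f : ℕ → ℕ → ℝ,
      (∀ a b, 0 ≤ f a b) →
      (∀ (i j : ℕ) (hi : i < S.length) (hj : j < T.length),
        f i j = dist (S[i]'hi) (T[j]'hj) ^ 2) →
      S.length + T.length ≤ n →
      ENNReal.ofReal (warpMat f (S.length - 1) (T.length - 1)) = DTW S T := by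
  intro n
  induction n with
  | zero =>
      intro S T hS hT f hnn hf h
      match S, T with
      | s :: S', t :: T' => simp at h
  | succ n ih =>
      intro S T hS hT f hnn hf h
      have mono : Monotone ENNReal.ofReal := fun _ _ hab => ENNReal.ofReal_le_ofReal hab
      match S, T with
      | s :: S', t :: T' =>
        have h00 : f 0 0 = dist s t ^ 2 := hf 0 0 (by simp) (by simp)
        match S', T' with
        | [], [] =>
            simp [warpMat, DTW_single, h00]
        | [], t' :: T'' =>
            simp only [List.length_cons, List.length_nil, Nat.add_sub_cancel, Nat.zero_add]
            rw [warp_col f T''.length]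
            have hIH : ENNReal.ofReal (warpMat (fun a b => f a (b + 1)) 0 T''.length) =
                DTW [s] (t' :: T'') := by
              have := ih [s] (t' :: T'') (by simp) (by simp) (fun a b => f a (b + 1))
                (fun a b => hnn a (b + 1))
                (fun i j hi hj => by
                  have := hf i (j + 1) (by simpa using hi) (by simpa using hj)
                  simpa using this)
                (by simp at h ⊢; omega)
              simpa using this
            have hrec : DTW [s] (t :: t' :: T'') =
                ENNReal.ofReal (dist s t ^ 2) + DTW [s] (t' :: T'') := by
              rw [DTW_cons s t [] (t' :: T'') (Or.inr (by simp))]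
              rw [DTW_nil, DTW_nil, min_eq_right le_top, min_eq_right le_top]
            rw [ENNReal.ofReal_add (hnn 0 0)
              (warpMat_nonneg _ (fun a b => hnn a (b + 1)) 0 T''.length), hIH, hrec, h00]
        | s' :: S'', [] =>
            simp only [List.length_cons, List.length_nil, Nat.add_sub_cancel, Nat.zero_add]
            rw [warp_row f S''.length]
            have hIH : ENNReal.ofReal (warpMat (fun a b => f (a + 1) b) S''.length 0) =
                DTW (s' :: S'') [t] := by
              have := ih (s' :: S'') [t] (by simp) (by simp) (fun a b => f (a + 1) b)
                (fun a b => hnn (a + 1) b)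
                (fun i j hi hj => by
                  have := hf (i + 1) j (by simpa using hi) (by simpa using hj)
                  simpa using this)
                (by simp at h ⊢; omega)
              simpa using this
            have hrec : DTW (s :: s' :: S'') [t] =
                ENNReal.ofReal (dist s t ^ 2) + DTW (s' :: S'') [t] := by
              rw [DTW_cons s t (s' :: S'') [] (Or.inl (by simp))]
              rw [DTW_cons_nil, DTW_cons_nil, min_eq_right le_top, min_eq_left le_top]
            rw [ENNReal.ofReal_add (hnn 0 0)
              (warpMat_nonneg _ (fun a b => hnn (a + 1) b) S''.length 0), hIH, hrec, h00]
        | s' :: S'', t' :: T'' =>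
            simp only [List.length_cons, List.length_nil, Nat.add_sub_cancel, Nat.zero_add]
            rw [warp_peel (S''.length + T''.length) f S''.length T''.length (le_refl _)]
            have m1 := warpMat_nonneg (fun a b => f (a + 1) (b + 1))
              (fun a b => hnn (a + 1) (b + 1)) S''.length T''.length
            have m2 := warpMat_nonneg (fun a b => f (a + 1) b)
              (fun a b => hnn (a + 1) b) S''.length (T''.length + 1)
            have m3 := warpMat_nonneg (fun a b => f a (b + 1))
              (fun a b => hnn a (b + 1)) (S''.length + 1) T''.length
            have hA : ENNReal.ofReal (warpMat (fun a b => f (a + 1) (b + 1)) S''.length T''.length) =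
                DTW (s' :: S'') (t' :: T'') := by
              have := ih (s' :: S'') (t' :: T'') (by simp) (by simp)
                (fun a b => f (a + 1) (b + 1)) (fun a b => hnn (a + 1) (b + 1))
                (fun i j hi hj => by
                  have := hf (i + 1) (j + 1) (by simpa using hi) (by simpa using hj)
                  simpa using this)
                (by simp at h ⊢; omega)
              simpa using this
            have hB : ENNReal.ofReal (warpMat (fun a b => f (a + 1) b) S''.length (T''.length + 1)) =
                DTW (s' :: S'') (t :: t' :: T'') := by
              have := ih (s' :: S'') (t :: t' :: T'') (by simp) (by simp)
                (fun a b => f (a + 1) b) (fun a b => hnn (a + 1) b)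
                (fun i j hi hj => by
                  have := hf (i + 1) j (by simpa using hi) (by simpa using hj)
                  simpa using this)
                (by simp at h ⊢; omega)
              simpa using this
            have hC : ENNReal.ofReal (warpMat (fun a b => f a (b + 1)) (S''.length + 1) T''.length) =
                DTW (s :: s' :: S'') (t' :: T'') := by
              have := ih (s :: s' :: S'') (t' :: T'') (by simp) (by simp)
                (fun a b => f a (b + 1)) (fun a b => hnn a (b + 1))
                (fun i j hi hj => by
                  have := hf i (j + 1) (by simpa using hi) (by simpa using hj)
                  simpa using this)
                (by simp at h ⊢; omega)
              simpa using this
            rw [ENNReal.ofReal_add (hnn 0 0) (le_min m1 (le_min m2 m3)), mono.map_min,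
              mono.map_min, hA, hB, hC, h00,
              DTW_cons s t (s' :: S'') (t' :: T'') (Or.inl (by simp))]

lemma warp_colmin : ∀ (n : ℕ) (f : ℕ → ℕ → ℝ), (∀ a b, 0 ≤ f a b) → ∀ j₀ i j, i + j ≤ n → j₀ ≤ j →
    ∃ i' ≤ i, warpMat f i' j₀ ≤ warpMat f i j := by
  intro n
  induction n with
  | zero =>
      intro f hnn j₀ i j h hj
      obtain ⟨rfl, rfl⟩ : i = 0 ∧ j = 0 := by omega
      obtain rfl : j₀ = 0 := by omega
      exact ⟨0, le_refl _, le_refl _⟩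
  | succ n ih =>
      intro f hnn j₀ i j h hj
      rcases eq_or_lt_of_le hj with rfl | hlt
      · exact ⟨i, le_refl _, le_refl _⟩
      · obtain ⟨j'', rfl⟩ : ∃ j'', j = j'' + 1 := ⟨j - 1, by omega⟩
        match i with
        | 0 =>
            obtain ⟨i', hi', hle⟩ := ih f hnn j₀ 0 j'' (by omega) (by omega)
            refine ⟨i', hi', hle.trans ?_⟩
            conv_rhs => rw [warpMat]
            linarith [hnn 0 (j'' + 1)]
        | i'' + 1 =>
            have hW : warpMat f (i'' + 1) (j'' + 1) = f (i'' + 1) (j'' + 1) +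
                min (warpMat f i'' (j'' + 1)) (min (warpMat f (i'' + 1) j'') (warpMat f i'' j'')) := by
              conv_lhs => rw [warpMat]
            have hnn' := hnn (i'' + 1) (j'' + 1)
            rcases le_total (warpMat f i'' (j'' + 1)) (min (warpMat f (i'' + 1) j'') (warpMat f i'' j'')) with h1 | h1
            · obtain ⟨i', hi', hle⟩ := ih f hnn j₀ i'' (j'' + 1) (by omega) (by omega)
              refine ⟨i', by omega, hle.trans ?_⟩
              have := min_eq_left h1
              linarith
            · rcases le_total (warpMat f (i'' + 1) j'') (warpMat f i'' j'') with h2 | h2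
              · obtain ⟨i', hi', hle⟩ := ih f hnn j₀ (i'' + 1) j'' (by omega) (by omega)
                refine ⟨i', hi', hle.trans ?_⟩
                have e1 := min_eq_right h1
                have e2 := min_eq_left h2
                linarith
              · obtain ⟨i', hi', hle⟩ := ih f hnn j₀ i'' j'' (by omega) (by omega)
                refine ⟨i', by omega, hle.trans ?_⟩
                have e1 := min_eq_right h1
                have e2 := min_eq_right h2
                linarith


/-- for nonempty sequences `S`, `T` with `f i j = d(s_{i+1}, t_{j+1})²`, the top
right entry of the warping matrix equals `DTW(S,T)`, and for every fixed column index `j₀` the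
column minimum `min_i W(i, j₀)` is a lower bound to `DTW(S,T)`. -/
theorem statement17
    {M : Type*} [MetricSpace M] (S T : List M) (hS : S ≠ []) (hT : T ≠ [])
    (f : ℕ → ℕ → ℝ)
    (hf : ∀ i j, f i j = dist (S.getD i (S.head hS)) (T.getD j (T.head hT)) ^ 2) :
    ENNReal.ofReal (warpMat f (S.length - 1) (T.length - 1)) = DTW S T ∧
    ∀ j₀ < T.length,
      ENNReal.ofReal (⨅ i : Fin S.length, warpMat f i j₀) ≤ DTW S T := by

  have hlenS : 0 < S.length := List.length_pos_iff.mpr hS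
  have hlenT : 0 < T.length := List.length_pos_iff.mpr hT
  have hnn : ∀ a b, 0 ≤ f a b := fun a b => by rw [hf]; positivity
  have hf' : ∀ (i j : ℕ) (hi : i < S.length) (hj : j < T.length),
      f i j = dist (S[i]'hi) (T[j]'hj) ^ 2 := by
    intro i j hi hj
    have e1 : S.getD i (S.head hS) = S[i]'hi := by
      rw [List.getD_eq_getElem?_getD, List.getElem?_eq_getElem hi]; rfl
    have e2 : T.getD j (T.head hT) = T[j]'hj := by
      rw [List.getD_eq_getElem?_getD, List.getElem?_eq_getElem hj]; rfl
    rw [hf i j, e1, e2]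
  have h1 : ENNReal.ofReal (warpMat f (S.length - 1) (T.length - 1)) = DTW S T :=
    dtw_eq (S.length + T.length) S T hS hT f hnn hf' (le_refl _)
  refine ⟨h1, ?_⟩
  intro j₀ hj₀
  obtain ⟨i', hi', hle⟩ := warp_colmin (S.length + T.length) f hnn j₀ (S.length - 1)
    (T.length - 1) (by omega) (by omega)
  have hi'' : i' < S.length := by omega
  calc ENNReal.ofReal (⨅ i : Fin S.length, warpMat f i j₀)
      ≤ ENNReal.ofReal (warpMat f i' j₀) := by
        apply ENNReal.ofReal_le_ofReal
        have := ciInf_le (Set.Finite.bddBelow (Set.finite_range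
          (fun i : Fin S.length => warpMat f i j₀))) (⟨i', hi''⟩ : Fin S.length)
        simpa using this
    _ ≤ ENNReal.ofReal (warpMat f (S.length - 1) (T.length - 1)) := ENNReal.ofReal_le_ofReal hle
    _ = DTW S T := h1
end
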